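/- arXiv:1808.03182 — 4 statements merged into one kernel-verified Lean document; each statement's English description precedes it below -/
import Mathlib

section
/- Let ℓ ≤ L and m ≤ M be real numbers and let Ω = [ℓ,L] × [m,M] ⊂ ℝ². Then the convex envelope over Ω of the function (x,y) ↦ xy is the function g(x,y) = max{mx + ℓy − ℓm, Mx + Ly − LM}; that is, g is convex on Ω, g(x,y) ≤ xy for all (x,y) ∈ Ω, and every convex function h : Ω → ℝ with h(x,y) ≤ xy on Ω satisfies h ≤ g pointwise on Ω. -/
/-- Over the rectangle `Ω = [ℓ,L] × [m,M]`, the function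
`g(x,y) = max {mx + ℓy − ℓm, Mx + Ly − LM}` is the convex envelope of `(x,y) ↦ xy`:
it is convex on `Ω`, underestimates `xy` on `Ω`, and dominates every convex underestimator. -/
theorem stmt_1 (ℓ L m M : ℝ) (hℓL : ℓ ≤ L) (hmM : m ≤ M) :
    ConvexOn ℝ (Set.Icc ℓ L ×ˢ Set.Icc m M)
      (fun p : ℝ × ℝ => max (m * p.1 + ℓ * p.2 - ℓ * m) (M * p.1 + L * p.2 - L * M)) ∧
    (∀ p ∈ Set.Icc ℓ L ×ˢ Set.Icc m M,
      max (m * p.1 + ℓ * p.2 - ℓ * m) (M * p.1 + L * p.2 - L * M) ≤ p.1 * p.2) ∧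
    (∀ h : ℝ × ℝ → ℝ, ConvexOn ℝ (Set.Icc ℓ L ×ˢ Set.Icc m M) h →
      (∀ p ∈ Set.Icc ℓ L ×ˢ Set.Icc m M, h p ≤ p.1 * p.2) →
      ∀ p ∈ Set.Icc ℓ L ×ˢ Set.Icc m M,
        h p ≤ max (m * p.1 + ℓ * p.2 - ℓ * m) (M * p.1 + L * p.2 - L * M)) := by
  have hconvSet : Convex ℝ (Set.Icc ℓ L ×ˢ Set.Icc m M) :=
    (convex_Icc ℓ L).prod (convex_Icc m M)
  have h1 : ConvexOn ℝ (Set.Icc ℓ L ×ˢ Set.Icc m M)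
      (fun p : ℝ × ℝ => m * p.1 + ℓ * p.2 - ℓ * m) := by
    refine ⟨hconvSet, fun x _ y _ a b ha hb hab => ?_⟩
    simp only [Prod.smul_fst, Prod.smul_snd, Prod.fst_add, Prod.snd_add, smul_eq_mul]
    exact le_of_eq (by linear_combination (ℓ * m) * hab)
  have h2 : ConvexOn ℝ (Set.Icc ℓ L ×ˢ Set.Icc m M)
      (fun p : ℝ × ℝ => M * p.1 + L * p.2 - L * M) := by
    refine ⟨hconvSet, fun x _ y _ a b ha hb hab => ?_⟩
    simp only [Prod.smul_fst, Prod.smul_snd, Prod.fst_add, Prod.snd_add, smul_eq_mul]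
    exact le_of_eq (by linear_combination (L * M) * hab)
  refine ⟨h1.sup h2, ?_, ?_⟩
  · rintro p ⟨⟨hx1, hx2⟩, hy1, hy2⟩
    refine max_le ?_ ?_
    · nlinarith [mul_nonneg (sub_nonneg.2 hx1) (sub_nonneg.2 hy1)]
    · nlinarith [mul_nonneg (sub_nonneg.2 hx2) (sub_nonneg.2 hy2)]
  · intro h hconv hle p hp
    obtain ⟨⟨hx1, hx2⟩, hy1, hy2⟩ := hp
    rcases eq_or_lt_of_le hx1 with heq | hx1'
    · -- p.1 = ℓ
      refine le_max_of_le_left ?_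
      calc h p ≤ p.1 * p.2 := hle p ⟨⟨hx1, hx2⟩, hy1, hy2⟩
        _ = m * p.1 + ℓ * p.2 - ℓ * m := by rw [← heq]; ring
    rcases eq_or_lt_of_le hx2 with heq2 | hx2'
    · -- p.1 = L
      refine le_max_of_le_right ?_
      calc h p ≤ p.1 * p.2 := hle p ⟨⟨hx1, hx2⟩, hy1, hy2⟩
        _ = M * p.1 + L * p.2 - L * M := by rw [heq2]; ring
    have hℓL' : ℓ < L := lt_trans hx1' hx2'
    have hLℓ : (0:ℝ) < L - ℓ := by linarith
    rcases le_or_gt ((M - m) * p.1 + (L - ℓ) * p.2) (L * M - ℓ * m) with hc | hc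
    · -- lower-left triangle: use endpoints (ℓ, s) and (L, m)
      set u : ℝ := (p.1 - ℓ) / (L - ℓ) with hu_def
      have hu0 : 0 ≤ u := div_nonneg (by linarith) (by linarith)
      have hu1 : u < 1 := (div_lt_one hLℓ).2 (by linarith)
      have h1u : (0:ℝ) < 1 - u := by linarith
      have huL : u * (L - ℓ) = p.1 - ℓ := div_mul_cancel₀ _ (ne_of_gt hLℓ)
      set s : ℝ := (p.2 - u * m) / (1 - u) with hs_def
      have hss : (1 - u) * s = p.2 - u * m := mul_div_cancel₀ _ (ne_of_gt h1u)
      have hsm : m ≤ s := by nlinarith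
      have hsM : s ≤ M := by nlinarith
      have hamem : ((ℓ, s) : ℝ × ℝ) ∈ Set.Icc ℓ L ×ˢ Set.Icc m M :=
        ⟨⟨le_refl ℓ, hℓL⟩, hsm, hsM⟩
      have hbmem : ((L, m) : ℝ × ℝ) ∈ Set.Icc ℓ L ×ˢ Set.Icc m M :=
        ⟨⟨hℓL, le_refl L⟩, le_refl m, hmM⟩
      have hpe : (1 - u) • ((ℓ, s) : ℝ × ℝ) + u • ((L, m) : ℝ × ℝ) = p := by
        apply Prod.ext
        · simp only [Prod.smul_fst, Prod.fst_add, smul_eq_mul]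
          linear_combination huL
        · simp only [Prod.smul_snd, Prod.snd_add, smul_eq_mul]
          linear_combination hss
      have hcomb := hconv.2 hamem hbmem (le_of_lt h1u) hu0 (by ring)
      rw [hpe] at hcomb
      simp only [smul_eq_mul] at hcomb
      have ha' : h (ℓ, s) ≤ ℓ * s := hle _ hamem
      have hb' : h (L, m) ≤ L * m := hle _ hbmem
      refine le_max_of_le_left ?_
      have key : (1 - u) * (ℓ * s) + u * (L * m) = m * p.1 + ℓ * p.2 - ℓ * m := by
        linear_combination ℓ * hss + m * huL
      have t1 := mul_le_mul_of_nonneg_left ha' (le_of_lt h1u)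
      have t2 := mul_le_mul_of_nonneg_left hb' hu0
      linarith
    · -- upper-right triangle: use endpoints (L, s) and (ℓ, M)
      set u : ℝ := (L - p.1) / (L - ℓ) with hu_def
      have hu0 : 0 ≤ u := div_nonneg (by linarith) (by linarith)
      have hu1 : u < 1 := (div_lt_one hLℓ).2 (by linarith)
      have h1u : (0:ℝ) < 1 - u := by linarith
      have huL : u * (L - ℓ) = L - p.1 := div_mul_cancel₀ _ (ne_of_gt hLℓ)
      set s : ℝ := (p.2 - u * M) / (1 - u) with hs_def
      have hss : (1 - u) * s = p.2 - u * M := mul_div_cancel₀ _ (ne_of_gt h1u)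
      have hsm : m ≤ s := by nlinarith
      have hsM : s ≤ M := by nlinarith
      have hamem : ((L, s) : ℝ × ℝ) ∈ Set.Icc ℓ L ×ˢ Set.Icc m M :=
        ⟨⟨hℓL, le_refl L⟩, hsm, hsM⟩
      have hbmem : ((ℓ, M) : ℝ × ℝ) ∈ Set.Icc ℓ L ×ˢ Set.Icc m M :=
        ⟨⟨le_refl ℓ, hℓL⟩, hmM, le_refl M⟩
      have hpe : (1 - u) • ((L, s) : ℝ × ℝ) + u • ((ℓ, M) : ℝ × ℝ) = p := by
        apply Prod.ext
        · simp only [Prod.smul_fst, Prod.fst_add, smul_eq_mul]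
          linear_combination -huL
        · simp only [Prod.smul_snd, Prod.snd_add, smul_eq_mul]
          linear_combination hss
      have hcomb := hconv.2 hamem hbmem (le_of_lt h1u) hu0 (by ring)
      rw [hpe] at hcomb
      simp only [smul_eq_mul] at hcomb
      have ha' : h (L, s) ≤ L * s := hle _ hamem
      have hb' : h (ℓ, M) ≤ ℓ * M := hle _ hbmem
      refine le_max_of_le_right ?_
      have key : (1 - u) * (L * s) + u * (ℓ * M) = M * p.1 + L * p.2 - L * M := by
        linear_combination L * hss - M * huL
      have t1 := mul_le_mul_of_nonneg_left ha' (le_of_lt h1u)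
      have t2 := mul_le_mul_of_nonneg_left hb' hu0
      linarith
end

section
/- Let ℓ, L, m, M ∈ ℝⁿ with ℓ_i ≤ L_i and m_i ≤ M_i for all i, and let Ω = {(x,y) ∈ ℝⁿ × ℝⁿ : ℓ_i ≤ x_i ≤ L_i, m_i ≤ y_i ≤ M_i for all i}. Then the convex envelope over Ω of the bilinear function (x,y) ↦ xᵀy decomposes coordinatewise: (Vex_Ω (xᵀy))(x,y) = Σ_{i=1}^n max{m_i x_i + ℓ_i y_i − ℓ_i m_i, M_i x_i + L_i y_i − L_i M_i} for all (x,y) ∈ Ω. -/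
/-!
The McCormick function `E(x, y) = ∑ᵢ max (mᵢxᵢ + ℓᵢyᵢ - ℓᵢmᵢ) (Mᵢxᵢ + Lᵢyᵢ - LᵢMᵢ)` is convex and
lies below `xᵀy` on the box, so it is one of the competitors in the supremum. Conversely, each
pair `(xᵢ, yᵢ)` is a convex combination of the corners of `[ℓᵢ, Lᵢ] × [mᵢ, Mᵢ]` at which `xᵢyᵢ`
averages to at most the `i`-th McCormick term. Taking product weights writes `(x, y)` as a convex
combination of vertices of the box whose `xᵀy`-average is at most `E(x, y)`, and Jensen's
inequality bounds every convex underestimator of `xᵀy` at `(x, y)` by that average.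
-/

/-- The convex envelope of a function `F` over a set `D`: the pointwise supremum of all
convex functions on `D` underestimating `F` on `D`. -/
noncomputable def convexEnvelope {E : Type*} [AddCommGroup E] [Module ℝ E]
    (D : Set E) (F : E → ℝ) (p : E) : ℝ :=
  sSup {v | ∃ g : E → ℝ, ConvexOn ℝ D g ∧ (∀ q ∈ D, g q ≤ F q) ∧ v = g p}

open Set

theorem convexEnvelope_eq_of_forall_le {E : Type*} [AddCommGroup E] [Module ℝ E]
    {D : Set E} {F h : E → ℝ} {p : E} (hh : ConvexOn ℝ D h) (hhF : ∀ q ∈ D, h q ≤ F q)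
    (hmax : ∀ g, ConvexOn ℝ D g → (∀ q ∈ D, g q ≤ F q) → g p ≤ h p) :
    convexEnvelope D F p = h p := by
  refine IsGreatest.csSup_eq ⟨⟨h, hh, hhF, rfl⟩, ?_⟩
  rintro _ ⟨g, hg, hgF, rfl⟩
  exact hmax g hg hgF

theorem convexOn_sum {𝕜 E β ι : Type*} [Semiring 𝕜] [PartialOrder 𝕜] [AddCommMonoid E]
    [AddCommMonoid β] [PartialOrder β] [IsOrderedAddMonoid β] [SMul 𝕜 E] [Module 𝕜 β]
    {s : Set E} {t : Finset ι} {f : ι → E → β} (hs : Convex 𝕜 s)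
    (hf : ∀ i ∈ t, ConvexOn 𝕜 s (f i)) : ConvexOn 𝕜 s (fun x => ∑ i ∈ t, f i x) := by
  refine ⟨hs, fun x hx y hy a b ha hb hab => ?_⟩
  calc ∑ i ∈ t, f i (a • x + b • y) ≤ ∑ i ∈ t, (a • f i x + b • f i y) :=
        Finset.sum_le_sum fun i hi => (hf i hi).2 hx hy ha hb hab
    _ = a • ∑ i ∈ t, f i x + b • ∑ i ∈ t, f i y := by
        rw [Finset.sum_add_distrib, Finset.smul_sum, Finset.smul_sum]

theorem sum_prod_mul_apply {ι C R : Type*} [Fintype ι] [DecidableEq ι] [Fintype C]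
    [CommSemiring R] {w : ι → C → R} (hw : ∀ i, ∑ c, w i c = 1) (j : ι) (f : C → R) :
    ∑ K : ι → C, (∏ i, w i (K i)) * f (K j) = ∑ c, w j c * f c := by
  have hK : ∀ K : ι → C,
      (∏ i, w i (K i)) * f (K j) = ∏ i, w i (K i) * if i = j then f (K i) else 1 := by
    intro K
    rw [Finset.prod_mul_distrib, Finset.prod_ite_eq', if_pos (Finset.mem_univ j)]
  have hsum : ∀ i, ∑ c, w i c * (if i = j then f c else 1) =
      if i = j then ∑ c, w j c * f c else 1 := by
    intro i
    split_ifs with h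
    · subst h; rfl
    · simp only [mul_one, hw i]
  simp_rw [hK]
  rw [← Fintype.prod_sum (fun i c => w i c * if i = j then f c else 1)]
  simp_rw [hsum]
  rw [Finset.prod_ite_eq', if_pos (Finset.mem_univ j)]

theorem vecCons_apply_mem_Icc {α : Type*} [Preorder α] {a b : α} (h : a ≤ b) (k : Fin 2) :
    ![a, b] k ∈ Icc a b := by
  fin_cases k <;> simp [h]

theorem mem_Icc_prod_pi_iff {ι α : Type*} [Preorder α] {ℓ L m M : ι → α}
    {p : (ι → α) × (ι → α)} :
    p ∈ Icc (ℓ, m) (L, M) ↔ ∀ i, p.1 i ∈ Icc (ℓ i) (L i) ∧ p.2 i ∈ Icc (m i) (M i) := by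
  simp only [mem_Icc, Prod.le_def, Pi.le_def]
  constructor
  · rintro ⟨⟨h1, h2⟩, h3, h4⟩ i
    exact ⟨⟨h1 i, h3 i⟩, h2 i, h4 i⟩
  · intro h
    exact ⟨⟨fun i => (h i).1.1, fun i => (h i).2.1⟩, fun i => (h i).1.2, fun i => (h i).2.2⟩

def mcCormick (a b c d x y : ℝ) : ℝ :=
  max (c * x + a * y - a * c) (d * x + b * y - b * d)

theorem mcCormick_le_mul {a b c d x y : ℝ} (hx : x ∈ Icc a b) (hy : y ∈ Icc c d) :
    mcCormick a b c d x y ≤ x * y :=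
  max_le (by nlinarith [mul_nonneg (sub_nonneg.2 hx.1) (sub_nonneg.2 hy.1)])
    (by nlinarith [mul_nonneg (sub_nonneg.2 hx.2) (sub_nonneg.2 hy.2)])

theorem convexOn_mcCormick (a b c d : ℝ) :
    ConvexOn ℝ univ fun z : ℝ × ℝ => mcCormick a b c d z.1 z.2 := by
  refine ⟨convex_univ, fun u _ v _ α β hα hβ hαβ => ?_⟩
  simp only [mcCormick, Prod.fst_add, Prod.snd_add, Prod.smul_fst, Prod.smul_snd, smul_eq_mul]
  apply max_le
  · calc c * (α * u.1 + β * v.1) + a * (α * u.2 + β * v.2) - a * c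
          = α * (c * u.1 + a * u.2 - a * c) + β * (c * v.1 + a * v.2 - a * c) := by
            linear_combination a * c * hαβ
      _ ≤ _ := by gcongr <;> exact le_max_left _ _
  · calc d * (α * u.1 + β * v.1) + b * (α * u.2 + β * v.2) - b * d
          = α * (d * u.1 + b * u.2 - b * d) + β * (d * v.1 + b * v.2 - b * d) := by
            linear_combination b * d * hαβ
      _ ≤ _ := by gcongr <;> exact le_max_right _ _

/- The diagonal from `(a, d)` to `(b, c)` cuts the rectangle into two triangles; on each, `x * y`
agrees at the three corners with one of the two planes of `mcCormick`, so barycentric weights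
`s, t` (with `x = a + s (b - a)`, `y = c + t (d - c)`) do the job. -/
theorem exists_corner_weights {a b c d x y : ℝ} (hx : x ∈ Icc a b) (hy : y ∈ Icc c d) :
    ∃ w : Fin 2 × Fin 2 → ℝ, (∀ k, 0 ≤ w k) ∧ ∑ k, w k = 1 ∧
      ∑ k, w k * ![a, b] k.1 = x ∧ ∑ k, w k * ![c, d] k.2 = y ∧
      ∑ k, w k * (![a, b] k.1 * ![c, d] k.2) ≤ mcCormick a b c d x y := by
  obtain ⟨s, ⟨hs0, hs1⟩, rfl⟩ : ∃ s ∈ Icc (0 : ℝ) 1, a + s • (b - a) = x := by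
    rwa [← segment_eq_Icc (hx.1.trans hx.2), segment_eq_image'] at hx
  obtain ⟨t, ⟨ht0, ht1⟩, rfl⟩ : ∃ t ∈ Icc (0 : ℝ) 1, c + t • (d - c) = y := by
    rwa [← segment_eq_Icc (hy.1.trans hy.2), segment_eq_image'] at hy
  simp only [Fintype.sum_prod_type, Fin.sum_univ_two, Matrix.cons_val_zero, Matrix.cons_val_one,
    smul_eq_mul, Prod.forall, Fin.forall_fin_two, mcCormick]
  rcases le_total (s + t) 1 with h | h
  · refine ⟨fun k => ![![1 - s - t, t], ![s, 0]] k.1 k.2, ?_, ?_, ?_, ?_, le_max_of_le_left ?_⟩ <;>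
      simp only [Matrix.cons_val_zero, Matrix.cons_val_one]
    · exact ⟨⟨by linarith, ht0⟩, hs0, le_rfl⟩
    all_goals linarith
  · refine ⟨fun k => ![![0, 1 - s], ![1 - t, s + t - 1]] k.1 k.2, ?_, ?_, ?_, ?_,
      le_max_of_le_right ?_⟩ <;> simp only [Matrix.cons_val_zero, Matrix.cons_val_one]
    · exact ⟨⟨le_rfl, by linarith⟩, by linarith, by linarith⟩
    all_goals linarith

theorem convexOn_sum_mcCormick {ι : Type*} [Fintype ι] (ℓ L m M : ι → ℝ) :
    ConvexOn ℝ (Icc (ℓ, m) (L, M))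
      fun q => ∑ i, mcCormick (ℓ i) (L i) (m i) (M i) (q.1 i) (q.2 i) :=
  convexOn_sum (convex_Icc _ _) fun i _ =>
    ((convexOn_mcCormick (ℓ i) (L i) (m i) (M i)).comp_linearMap
      (LinearMap.prodMap (LinearMap.proj i) (LinearMap.proj i) :
        (ι → ℝ) × (ι → ℝ) →ₗ[ℝ] ℝ × ℝ)).subset (fun _ _ => trivial) (convex_Icc _ _)

theorem sum_mcCormick_le_sum_mul {ι : Type*} [Fintype ι] {ℓ L m M : ι → ℝ}
    {q : (ι → ℝ) × (ι → ℝ)} (hq : q ∈ Icc (ℓ, m) (L, M)) :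
    ∑ i, mcCormick (ℓ i) (L i) (m i) (M i) (q.1 i) (q.2 i) ≤ ∑ i, q.1 i * q.2 i :=
  Finset.sum_le_sum fun i _ =>
    mcCormick_le_mul (mem_Icc_prod_pi_iff.1 hq i).1 (mem_Icc_prod_pi_iff.1 hq i).2

theorem le_sum_mcCormick_of_convexOn {ι : Type*} [Fintype ι] [DecidableEq ι] {ℓ L m M : ι → ℝ}
    {g : (ι → ℝ) × (ι → ℝ) → ℝ} (hg : ConvexOn ℝ (Icc (ℓ, m) (L, M)) g)
    (hgF : ∀ q ∈ Icc (ℓ, m) (L, M), g q ≤ ∑ i, q.1 i * q.2 i) {p : (ι → ℝ) × (ι → ℝ)}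
    (hp : p ∈ Icc (ℓ, m) (L, M)) :
    g p ≤ ∑ i, mcCormick (ℓ i) (L i) (m i) (M i) (p.1 i) (p.2 i) := by
  rw [mem_Icc_prod_pi_iff] at hp
  choose w hw0 hw1 hwx hwy hwF using fun i => exists_corner_weights (hp i).1 (hp i).2
  let W : (ι → Fin 2 × Fin 2) → ℝ := fun K => ∏ i, w i (K i)
  let V : (ι → Fin 2 × Fin 2) → (ι → ℝ) × (ι → ℝ) :=
    fun K => (fun i => ![ℓ i, L i] (K i).1, fun i => ![m i, M i] (K i).2)
  have hW0 : ∀ K, 0 ≤ W K := fun K => Finset.prod_nonneg fun i _ => hw0 i (K i)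
  have hW1 : ∑ K, W K = 1 := by simp only [W, ← Fintype.prod_sum, hw1, Finset.prod_const_one]
  have hV : ∀ K, V K ∈ Icc (ℓ, m) (L, M) := fun K => mem_Icc_prod_pi_iff.2 fun i =>
    ⟨vecCons_apply_mem_Icc ((hp i).1.1.trans (hp i).1.2) _,
      vecCons_apply_mem_Icc ((hp i).2.1.trans (hp i).2.2) _⟩
  have hWV : ∑ K, W K • V K = p := by
    ext i
    · simpa [V, Prod.fst_sum, Finset.sum_apply] using
        (sum_prod_mul_apply hw1 i fun k => ![ℓ i, L i] k.1).trans (hwx i)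
    · simpa [V, Prod.snd_sum, Finset.sum_apply] using
        (sum_prod_mul_apply hw1 i fun k => ![m i, M i] k.2).trans (hwy i)
  calc g p = g (∑ K, W K • V K) := by rw [hWV]
    _ ≤ ∑ K, W K • g (V K) := hg.map_sum_le (fun K _ => hW0 K) hW1 (fun K _ => hV K)
    _ ≤ ∑ K, W K * ∑ i, (V K).1 i * (V K).2 i :=
        Finset.sum_le_sum fun K _ => mul_le_mul_of_nonneg_left (hgF _ (hV K)) (hW0 K)
    _ = ∑ i, ∑ k, w i k * (![ℓ i, L i] k.1 * ![m i, M i] k.2) := by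
        simp_rw [Finset.mul_sum]
        rw [Finset.sum_comm]
        exact Finset.sum_congr rfl fun i _ =>
          sum_prod_mul_apply hw1 i fun k => ![ℓ i, L i] k.1 * ![m i, M i] k.2
    _ ≤ _ := Finset.sum_le_sum fun i _ => hwF i

theorem stmt_3_general (n : ℕ) (ℓ L m M : Fin n → ℝ)
    (Ω : Set ((Fin n → ℝ) × (Fin n → ℝ)))
    (hΩ : Ω = {p | ∀ i, ℓ i ≤ p.1 i ∧ p.1 i ≤ L i ∧ m i ≤ p.2 i ∧ p.2 i ≤ M i}) :
    ∀ p ∈ Ω, convexEnvelope Ω (fun q => ∑ i, q.1 i * q.2 i) p =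
      ∑ i, max (m i * p.1 i + ℓ i * p.2 i - ℓ i * m i)
        (M i * p.1 i + L i * p.2 i - L i * M i) := by
  obtain rfl : Ω = Icc (ℓ, m) (L, M) := by
    ext p
    rw [hΩ, mem_Icc_prod_pi_iff]
    simp only [Set.mem_ofPred_eq, mem_Icc, and_assoc]
  intro p hp
  exact convexEnvelope_eq_of_forall_le (convexOn_sum_mcCormick ℓ L m M)
    (fun _ hq => sum_mcCormick_le_sum_mul hq) fun g hg hgF => le_sum_mcCormick_of_convexOn hg hgF hp

/-- Over a hyperrectangle `Ω = Ω(ℓ,L,m,M) ⊂ ℝⁿ × ℝⁿ`, the convex envelope of the bilinear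
function `(x,y) ↦ xᵀy` decomposes coordinatewise:
`(Vex_Ω (xᵀy))(x,y) = Σᵢ max {mᵢxᵢ + ℓᵢyᵢ − ℓᵢmᵢ, Mᵢxᵢ + Lᵢyᵢ − LᵢMᵢ}`. -/
theorem stmt_3 (n : ℕ) (ℓ L m M : Fin n → ℝ)
    (hℓL : ∀ i, ℓ i ≤ L i) (hmM : ∀ i, m i ≤ M i)
    (Ω : Set ((Fin n → ℝ) × (Fin n → ℝ)))
    (hΩ : Ω = {p | ∀ i, ℓ i ≤ p.1 i ∧ p.1 i ≤ L i ∧ m i ≤ p.2 i ∧ p.2 i ≤ M i}) :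
    ∀ p ∈ Ω, convexEnvelope Ω (fun q => ∑ i, q.1 i * q.2 i) p =
      ∑ i, max (m i * p.1 i + ℓ i * p.2 i - ℓ i * m i)
        (M i * p.1 i + L i * p.2 i - L i * M i) :=
  stmt_3_general n ℓ L m M Ω hΩ
end

section
/- Let p, q, K be positive integers with K ≤ min(p²,q²), let σ_1,…,σ_K ≥ 0, a ∈ ℝ^{p²}, b ∈ ℝ^{q²}, and define f : ℝ^{p²} × ℝ^{q²} → ℝ by f(x,y) = Σ_{j=1}^K σ_j x_j y_j + Σ_{j=1}^{p²} a_j x_j + Σ_{k=1}^{q²} b_k y_k. Let Ω = Ω(ℓ,L,m,M) ⊂ ℝ^{p²} × ℝ^{q²} be the hyperrectangle determined by vectors ℓ ≤ L in ℝ^{p²} and m ≤ M in ℝ^{q²}. Then the convex envelope of f over Ω is given by (Vex_Ω f)(x,y) = Σ_{j=1}^K max{σ_j(m_j x_j + ℓ_j y_j − ℓ_j m_j), σ_j(M_j x_j + L_j y_j − L_j M_j)} + Σ_{j=1}^{p²} a_j x_j + Σ_{k=1}^{q²} b_k y_k. -/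

lemma mccormick2 (l L m M x y : ℝ) (h1 : l ≤ x) (h2 : x ≤ L) (h3 : m ≤ y) (h4 : y ≤ M) :
    ∃ (lam : Fin 3 → ℝ) (v : Fin 3 → ℝ × ℝ),
      (∀ k, 0 ≤ lam k) ∧ (∑ k, lam k) = 1 ∧
      (∀ k, l ≤ (v k).1 ∧ (v k).1 ≤ L ∧ m ≤ (v k).2 ∧ (v k).2 ≤ M) ∧
      (∑ k, lam k * (v k).1) = x ∧ (∑ k, lam k * (v k).2) = y ∧
      (∑ k, lam k * ((v k).1 * (v k).2)) =
        max (m * x + l * y - l * m) (M * x + L * y - L * M) := by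
  rcases eq_or_lt_of_le (h1.trans h2) with hlL | hlL
  · -- l = L, so x = l
    have hx1 : x = l := le_antisymm (hlL ▸ h2) h1
    have hx2 : x = L := hlL ▸ hx1
    refine ⟨fun _ => (3:ℝ)⁻¹, fun _ => (x, y), fun k => by norm_num, by
      simp [Fin.sum_univ_three] <;> norm_num, fun k => ⟨h1, h2, h3, h4⟩, ?_, ?_, ?_⟩
    · simp [Fin.sum_univ_three] <;> ring
    · simp [Fin.sum_univ_three] <;> ring
    · have hA : m * x + l * y - l * m = x * y := by rw [← hx1]; ring
      have hB : M * x + L * y - L * M = x * y := by rw [← hx2]; ring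
      rw [hA, hB, max_self]
      simp [Fin.sum_univ_three] <;> ring
  rcases eq_or_lt_of_le (h3.trans h4) with hmM | hmM
  · have hy1 : y = m := le_antisymm (hmM ▸ h4) h3
    have hy2 : y = M := hmM ▸ hy1
    refine ⟨fun _ => (3:ℝ)⁻¹, fun _ => (x, y), fun k => by norm_num, by
      simp [Fin.sum_univ_three] <;> norm_num, fun k => ⟨h1, h2, h3, h4⟩, ?_, ?_, ?_⟩
    · simp [Fin.sum_univ_three] <;> ring
    · simp [Fin.sum_univ_three] <;> ring
    · have hA : m * x + l * y - l * m = x * y := by rw [← hy1]; ring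
      have hB : M * x + L * y - L * M = x * y := by rw [← hy2]; ring
      rw [hA, hB, max_self]
      simp [Fin.sum_univ_three] <;> ring
  have hL0 : (0:ℝ) < L - l := by linarith
  have hM0 : (0:ℝ) < M - m := by linarith
  rcases le_total (M * x + L * y - L * M) (m * x + l * y - l * m) with hc | hc
  · -- lower-left triangle
    refine ⟨![1 - (x - l) / (L - l) - (y - m) / (M - m), (x - l) / (L - l), (y - m) / (M - m)],
      ![(l, m), (L, m), (l, M)], ?_, ?_, ?_, ?_, ?_, ?_⟩
    · intro k
      fin_cases k
      · have hk : (x - l) / (L - l) + (y - m) / (M - m) ≤ 1 := by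
          rw [div_add_div _ _ hL0.ne' hM0.ne', div_le_one (by positivity)]
          nlinarith
        simpa using by linarith
      · simpa using div_nonneg (by linarith) hL0.le
      · simpa using div_nonneg (by linarith) hM0.le
    · simp [Fin.sum_univ_three] <;> ring
    · intro k; fin_cases k <;> simp <;> constructor <;> first | linarith | constructor <;> linarith
    · simp [Fin.sum_univ_three]; field_simp; ring
    · simp [Fin.sum_univ_three]; field_simp; ring
    · rw [max_eq_left hc]; simp [Fin.sum_univ_three]; field_simp; ring
  · refine ⟨![1 - (L - x) / (L - l) - (M - y) / (M - m), (L - x) / (L - l), (M - y) / (M - m)],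
      ![(L, M), (l, M), (L, m)], ?_, ?_, ?_, ?_, ?_, ?_⟩
    · intro k
      fin_cases k
      · have hk : (L - x) / (L - l) + (M - y) / (M - m) ≤ 1 := by
          rw [div_add_div _ _ hL0.ne' hM0.ne', div_le_one (by positivity)]
          nlinarith
        simpa using by linarith
      · simpa using div_nonneg (by linarith) hL0.le
      · simpa using div_nonneg (by linarith) hM0.le
    · simp [Fin.sum_univ_three] <;> ring
    · intro k; fin_cases k <;> simp <;> constructor <;> first | linarith | constructor <;> linarith
    · simp [Fin.sum_univ_three]; field_simp; ring
    · simp [Fin.sum_univ_three]; field_simp; ring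
    · rw [max_eq_right hc]; simp [Fin.sum_univ_three]; field_simp; ring

lemma prod_marginal {K : ℕ} (lam : Fin K → Fin 3 → ℝ) (hl : ∀ j, ∑ k, lam j k = 1)
    (j0 : Fin K) (g : Fin 3 → ℝ) :
    ∑ i : Fin K → Fin 3, (∏ j, lam j (i j)) * g (i j0) = ∑ k, lam j0 k * g k := by
  have h1 : ∀ i : Fin K → Fin 3, (∏ j, lam j (i j)) * g (i j0)
      = ∏ j, (lam j (i j) * (if j = j0 then g (i j) else 1)) := by
    intro i
    rw [Finset.prod_mul_distrib, Finset.prod_ite_eq' Finset.univ j0 (fun j => g (i j))]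
    simp
  rw [Finset.sum_congr rfl fun i _ => h1 i]
  have h2 := Finset.prod_univ_sum (fun _ : Fin K => (Finset.univ : Finset (Fin 3)))
    (fun j k => lam j k * (if j = j0 then g k else 1))
  rw [Fintype.piFinset_univ] at h2
  rw [← h2]
  have h3 : ∀ j : Fin K, (∑ k, lam j k * (if j = j0 then g k else 1))
      = if j = j0 then ∑ k, lam j k * g k else 1 := by
    intro j
    by_cases hj : j = j0 <;> simp [hj, hl j]
  rw [Finset.prod_congr rfl fun j _ => h3 j,
    Finset.prod_ite_eq' Finset.univ j0 (fun j => ∑ k, lam j k * g k)]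
  simp

/-- Explicit form of the convex envelope of
`f(x,y) = Σ_{j<K} σⱼ xⱼ yⱼ + Σⱼ aⱼ xⱼ + Σₖ bₖ yₖ` over a hyperrectangle
`Ω = Ω(ℓ,L,m,M) ⊂ ℝ^{p²} × ℝ^{q²}`. -/
theorem stmt_4 (p q K : ℕ) (hp : 0 < p) (hq : 0 < q) (hK : 0 < K)
    (hKp : K ≤ p ^ 2) (hKq : K ≤ q ^ 2)
    (σ : Fin K → ℝ) (hσ : ∀ j, 0 ≤ σ j)
    (a : Fin (p ^ 2) → ℝ) (b : Fin (q ^ 2) → ℝ)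
    (ℓ L : Fin (p ^ 2) → ℝ) (m M : Fin (q ^ 2) → ℝ)
    (hℓL : ∀ j, ℓ j ≤ L j) (hmM : ∀ k, m k ≤ M k)
    (f : (Fin (p ^ 2) → ℝ) × (Fin (q ^ 2) → ℝ) → ℝ)
    (hf : ∀ z, f z = (∑ j : Fin K, σ j * z.1 (Fin.castLE hKp j) * z.2 (Fin.castLE hKq j)) +
      (∑ j, a j * z.1 j) + (∑ k, b k * z.2 k))
    (Ω : Set ((Fin (p ^ 2) → ℝ) × (Fin (q ^ 2) → ℝ)))
    (hΩ : Ω = {z | (∀ j, ℓ j ≤ z.1 j ∧ z.1 j ≤ L j) ∧ (∀ k, m k ≤ z.2 k ∧ z.2 k ≤ M k)}) :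
    ∀ z ∈ Ω, convexEnvelope Ω f z =
      (∑ j : Fin K, max
        (σ j * (m (Fin.castLE hKq j) * z.1 (Fin.castLE hKp j) +
          ℓ (Fin.castLE hKp j) * z.2 (Fin.castLE hKq j) -
          ℓ (Fin.castLE hKp j) * m (Fin.castLE hKq j)))
        (σ j * (M (Fin.castLE hKq j) * z.1 (Fin.castLE hKp j) +
          L (Fin.castLE hKp j) * z.2 (Fin.castLE hKq j) -
          L (Fin.castLE hKp j) * M (Fin.castLE hKq j)))) +
      (∑ j, a j * z.1 j) + (∑ k, b k * z.2 k) := by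
  intro z hz
  have hzbox := hΩ ▸ hz
  obtain ⟨hz1, hz2⟩ := hzbox
  set G : (Fin (p ^ 2) → ℝ) × (Fin (q ^ 2) → ℝ) → ℝ := fun u =>
      (∑ j : Fin K, max
        (σ j * (m (Fin.castLE hKq j) * u.1 (Fin.castLE hKp j) +
          ℓ (Fin.castLE hKp j) * u.2 (Fin.castLE hKq j) -
          ℓ (Fin.castLE hKp j) * m (Fin.castLE hKq j)))
        (σ j * (M (Fin.castLE hKq j) * u.1 (Fin.castLE hKp j) +
          L (Fin.castLE hKp j) * u.2 (Fin.castLE hKq j) -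
          L (Fin.castLE hKp j) * M (Fin.castLE hKq j)))) +
      (∑ j, a j * u.1 j) + (∑ k, b k * u.2 k) with hG
  show convexEnvelope Ω f z = G z
  -- convexity of Ω
  have hconvΩ : Convex ℝ Ω := by
    rw [hΩ]
    intro u hu v hv ca cb hca hcb hab
    refine ⟨fun j => ?_, fun k => ?_⟩ <;>
      simp only [Prod.fst_add, Prod.snd_add, Prod.smul_fst, Prod.smul_snd,
        Pi.add_apply, Pi.smul_apply, smul_eq_mul]
    · have h1 := hu.1 j; have h2 := hv.1 j
      have e1 : ca * ℓ j + cb * ℓ j = ℓ j := by linear_combination (ℓ j) * hab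
      have e2 : ca * L j + cb * L j = L j := by linear_combination (L j) * hab
      constructor <;>
        nlinarith [mul_le_mul_of_nonneg_left h1.1 hca, mul_le_mul_of_nonneg_left h2.1 hcb,
          mul_le_mul_of_nonneg_left h1.2 hca, mul_le_mul_of_nonneg_left h2.2 hcb]
    · have h1 := hu.2 k; have h2 := hv.2 k
      have e1 : ca * m k + cb * m k = m k := by linear_combination (m k) * hab
      have e2 : ca * M k + cb * M k = M k := by linear_combination (M k) * hab
      constructor <;>
        nlinarith [mul_le_mul_of_nonneg_left h1.1 hca, mul_le_mul_of_nonneg_left h2.1 hcb,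
          mul_le_mul_of_nonneg_left h1.2 hca, mul_le_mul_of_nonneg_left h2.2 hcb]
  -- G is convex on Ω
  have hGconv : ConvexOn ℝ Ω G := by
    refine ⟨hconvΩ, fun u _ v _ ca cb hca hcb hab => ?_⟩
    simp only [hG, Prod.fst_add, Prod.snd_add, Prod.smul_fst, Prod.smul_snd,
      Pi.add_apply, Pi.smul_apply, smul_eq_mul]
    have hlin1 : ∑ j, a j * (ca * u.1 j + cb * v.1 j)
        = ca * ∑ j, a j * u.1 j + cb * ∑ j, a j * v.1 j := by
      rw [Finset.mul_sum, Finset.mul_sum, ← Finset.sum_add_distrib]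
      exact Finset.sum_congr rfl fun j _ => by ring
    have hlin2 : ∑ k, b k * (ca * u.2 k + cb * v.2 k)
        = ca * ∑ k, b k * u.2 k + cb * ∑ k, b k * v.2 k := by
      rw [Finset.mul_sum, Finset.mul_sum, ← Finset.sum_add_distrib]
      exact Finset.sum_congr rfl fun j _ => by ring
    have hmaxle : ∀ j : Fin K,
        max (σ j * (m (Fin.castLE hKq j) * (ca * u.1 (Fin.castLE hKp j) + cb * v.1 (Fin.castLE hKp j)) +
            ℓ (Fin.castLE hKp j) * (ca * u.2 (Fin.castLE hKq j) + cb * v.2 (Fin.castLE hKq j)) -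
            ℓ (Fin.castLE hKp j) * m (Fin.castLE hKq j)))
          (σ j * (M (Fin.castLE hKq j) * (ca * u.1 (Fin.castLE hKp j) + cb * v.1 (Fin.castLE hKp j)) +
            L (Fin.castLE hKp j) * (ca * u.2 (Fin.castLE hKq j) + cb * v.2 (Fin.castLE hKq j)) -
            L (Fin.castLE hKp j) * M (Fin.castLE hKq j)))
        ≤ ca * max (σ j * (m (Fin.castLE hKq j) * u.1 (Fin.castLE hKp j) +
              ℓ (Fin.castLE hKp j) * u.2 (Fin.castLE hKq j) -
              ℓ (Fin.castLE hKp j) * m (Fin.castLE hKq j)))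
            (σ j * (M (Fin.castLE hKq j) * u.1 (Fin.castLE hKp j) +
              L (Fin.castLE hKp j) * u.2 (Fin.castLE hKq j) -
              L (Fin.castLE hKp j) * M (Fin.castLE hKq j)))
          + cb * max (σ j * (m (Fin.castLE hKq j) * v.1 (Fin.castLE hKp j) +
              ℓ (Fin.castLE hKp j) * v.2 (Fin.castLE hKq j) -
              ℓ (Fin.castLE hKp j) * m (Fin.castLE hKq j)))
            (σ j * (M (Fin.castLE hKq j) * v.1 (Fin.castLE hKp j) +
              L (Fin.castLE hKp j) * v.2 (Fin.castLE hKq j) -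
              L (Fin.castLE hKp j) * M (Fin.castLE hKq j))) := by
      intro j
      apply max_le
      · have e1 : σ j * (m (Fin.castLE hKq j) * (ca * u.1 (Fin.castLE hKp j) + cb * v.1 (Fin.castLE hKp j)) +
            ℓ (Fin.castLE hKp j) * (ca * u.2 (Fin.castLE hKq j) + cb * v.2 (Fin.castLE hKq j)) -
            ℓ (Fin.castLE hKp j) * m (Fin.castLE hKq j))
            = ca * (σ j * (m (Fin.castLE hKq j) * u.1 (Fin.castLE hKp j) +
                ℓ (Fin.castLE hKp j) * u.2 (Fin.castLE hKq j) -
                ℓ (Fin.castLE hKp j) * m (Fin.castLE hKq j)))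
              + cb * (σ j * (m (Fin.castLE hKq j) * v.1 (Fin.castLE hKp j) +
                ℓ (Fin.castLE hKp j) * v.2 (Fin.castLE hKq j) -
                ℓ (Fin.castLE hKp j) * m (Fin.castLE hKq j))) := by
          linear_combination (σ j * (ℓ (Fin.castLE hKp j) * m (Fin.castLE hKq j))) * hab
        rw [e1]
        exact add_le_add (mul_le_mul_of_nonneg_left (le_max_left _ _) hca)
          (mul_le_mul_of_nonneg_left (le_max_left _ _) hcb)
      · have e2 : σ j * (M (Fin.castLE hKq j) * (ca * u.1 (Fin.castLE hKp j) + cb * v.1 (Fin.castLE hKp j)) +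
            L (Fin.castLE hKp j) * (ca * u.2 (Fin.castLE hKq j) + cb * v.2 (Fin.castLE hKq j)) -
            L (Fin.castLE hKp j) * M (Fin.castLE hKq j))
            = ca * (σ j * (M (Fin.castLE hKq j) * u.1 (Fin.castLE hKp j) +
                L (Fin.castLE hKp j) * u.2 (Fin.castLE hKq j) -
                L (Fin.castLE hKp j) * M (Fin.castLE hKq j)))
              + cb * (σ j * (M (Fin.castLE hKq j) * v.1 (Fin.castLE hKp j) +
                L (Fin.castLE hKp j) * v.2 (Fin.castLE hKq j) -
                L (Fin.castLE hKp j) * M (Fin.castLE hKq j))) := by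
          linear_combination (σ j * (L (Fin.castLE hKp j) * M (Fin.castLE hKq j))) * hab
        rw [e2]
        exact add_le_add (mul_le_mul_of_nonneg_left (le_max_right _ _) hca)
          (mul_le_mul_of_nonneg_left (le_max_right _ _) hcb)
    have hsum := Finset.sum_le_sum (fun j (_ : j ∈ Finset.univ) => hmaxle j)
    rw [Finset.sum_add_distrib, ← Finset.mul_sum, ← Finset.mul_sum] at hsum
    rw [hlin1, hlin2]
    linarith [hsum]
  -- G underestimates f on Ω
  have hGle : ∀ u ∈ Ω, G u ≤ f u := by
    intro u hu
    rw [hΩ] at hu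
    rw [hf, hG]
    refine add_le_add (add_le_add (Finset.sum_le_sum fun j _ => ?_) le_rfl) le_rfl
    have h1 := hu.1 (Fin.castLE hKp j)
    have h2 := hu.2 (Fin.castLE hKq j)
    apply max_le
    · nlinarith [mul_nonneg (mul_nonneg (hσ j) (sub_nonneg.2 h1.1)) (sub_nonneg.2 h2.1)]
    · nlinarith [mul_nonneg (mul_nonneg (hσ j) (sub_nonneg.2 (h1.2))) (sub_nonneg.2 (h2.2))]
  -- McCormick representation for each bilinear coordinate
  have hrep : ∀ j : Fin K, ∃ (lam : Fin 3 → ℝ) (v : Fin 3 → ℝ × ℝ),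
      (∀ k, 0 ≤ lam k) ∧ (∑ k, lam k) = 1 ∧
      (∀ k, ℓ (Fin.castLE hKp j) ≤ (v k).1 ∧ (v k).1 ≤ L (Fin.castLE hKp j) ∧
        m (Fin.castLE hKq j) ≤ (v k).2 ∧ (v k).2 ≤ M (Fin.castLE hKq j)) ∧
      (∑ k, lam k * (v k).1) = z.1 (Fin.castLE hKp j) ∧
      (∑ k, lam k * (v k).2) = z.2 (Fin.castLE hKq j) ∧
      (∑ k, lam k * ((v k).1 * (v k).2)) =
        max (m (Fin.castLE hKq j) * z.1 (Fin.castLE hKp j) +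
            ℓ (Fin.castLE hKp j) * z.2 (Fin.castLE hKq j) -
            ℓ (Fin.castLE hKp j) * m (Fin.castLE hKq j))
          (M (Fin.castLE hKq j) * z.1 (Fin.castLE hKp j) +
            L (Fin.castLE hKp j) * z.2 (Fin.castLE hKq j) -
            L (Fin.castLE hKp j) * M (Fin.castLE hKq j)) := fun j =>
    mccormick2 _ _ _ _ _ _ (hz1 (Fin.castLE hKp j)).1 (hz1 (Fin.castLE hKp j)).2
      (hz2 (Fin.castLE hKq j)).1 (hz2 (Fin.castLE hKq j)).2
  choose lam v hnn hls hbox hvx hvy hvp using hrep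
  set w : (Fin K → Fin 3) → ℝ := fun i => ∏ j, lam j (i j) with hwdef
  set V : (Fin K → Fin 3) → (Fin (p ^ 2) → ℝ) × (Fin (q ^ 2) → ℝ) := fun i =>
    (fun j' => if h : (j' : ℕ) < K then (v ⟨(j' : ℕ), h⟩ (i ⟨(j' : ℕ), h⟩)).1 else z.1 j',
     fun k' => if h : (k' : ℕ) < K then (v ⟨(k' : ℕ), h⟩ (i ⟨(k' : ℕ), h⟩)).2 else z.2 k') with hVdef
  have hw0 : ∀ i, 0 ≤ w i := fun i => Finset.prod_nonneg fun j _ => hnn j (i j)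
  have hw1 : ∑ i, w i = 1 := by
    have h2 := Finset.prod_univ_sum (fun _ : Fin K => (Finset.univ : Finset (Fin 3)))
      (fun j k => lam j k)
    rw [Fintype.piFinset_univ] at h2
    simp only [hwdef]
    rw [← h2]
    simp [hls]
  have hcst : ∀ j : Fin K, (⟨((Fin.castLE hKp j : Fin (p ^ 2)) : ℕ), j.isLt⟩ : Fin K) = j :=
    fun j => rfl
  have hVe1 : ∀ i (j : Fin K), (V i).1 (Fin.castLE hKp j) = (v j (i j)).1 := by
    intro i j
    simp only [hVdef]
    rw [dif_pos (show ((Fin.castLE hKp j : Fin (p ^ 2)) : ℕ) < K from j.isLt)]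
    rfl
  have hVe2 : ∀ i (j : Fin K), (V i).2 (Fin.castLE hKq j) = (v j (i j)).2 := by
    intro i j
    simp only [hVdef]
    rw [dif_pos (show ((Fin.castLE hKq j : Fin (q ^ 2)) : ℕ) < K from j.isLt)]
    rfl
  have hV1 : ∀ j', ∑ i, w i * (V i).1 j' = z.1 j' := by
    intro j'
    by_cases h : (j' : ℕ) < K
    · have hm := prod_marginal lam hls ⟨(j' : ℕ), h⟩ (fun k => (v ⟨(j' : ℕ), h⟩ k).1)
      have hcast : Fin.castLE hKp (⟨(j' : ℕ), h⟩ : Fin K) = j' := Fin.ext rfl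
      simp only [hVdef, dif_pos h, hwdef]
      rw [hm, hvx ⟨(j' : ℕ), h⟩, hcast]
    · simp only [hVdef, dif_neg h]
      rw [← Finset.sum_mul, hw1, one_mul]
  have hV2 : ∀ k', ∑ i, w i * (V i).2 k' = z.2 k' := by
    intro k'
    by_cases h : (k' : ℕ) < K
    · have hm := prod_marginal lam hls ⟨(k' : ℕ), h⟩ (fun k => (v ⟨(k' : ℕ), h⟩ k).2)
      have hcast : Fin.castLE hKq (⟨(k' : ℕ), h⟩ : Fin K) = k' := Fin.ext rfl
      simp only [hVdef, dif_pos h, hwdef]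
      rw [hm, hvy ⟨(k' : ℕ), h⟩, hcast]
    · simp only [hVdef, dif_neg h]
      rw [← Finset.sum_mul, hw1, one_mul]
  have hVΩ : ∀ i, V i ∈ Ω := by
    intro i
    rw [hΩ]
    constructor
    · intro j'
      by_cases h : (j' : ℕ) < K
      · simp only [hVdef, dif_pos h]
        have hcast : Fin.castLE hKp (⟨(j' : ℕ), h⟩ : Fin K) = j' := Fin.ext rfl
        have := hbox ⟨(j' : ℕ), h⟩ (i ⟨(j' : ℕ), h⟩)
        rw [hcast] at this
        exact ⟨this.1, this.2.1⟩
      · simp only [hVdef, dif_neg h]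
        exact hz1 j'
    · intro k'
      by_cases h : (k' : ℕ) < K
      · simp only [hVdef, dif_pos h]
        have hcast : Fin.castLE hKq (⟨(k' : ℕ), h⟩ : Fin K) = k' := Fin.ext rfl
        have := hbox ⟨(k' : ℕ), h⟩ (i ⟨(k' : ℕ), h⟩)
        rw [hcast] at this
        exact ⟨this.2.2.1, this.2.2.2⟩
      · simp only [hVdef, dif_neg h]
        exact hz2 k'
  have hbil : ∀ j : Fin K,
      ∑ i, w i * ((V i).1 (Fin.castLE hKp j) * (V i).2 (Fin.castLE hKq j)) =
        max (m (Fin.castLE hKq j) * z.1 (Fin.castLE hKp j) +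
            ℓ (Fin.castLE hKp j) * z.2 (Fin.castLE hKq j) -
            ℓ (Fin.castLE hKp j) * m (Fin.castLE hKq j))
          (M (Fin.castLE hKq j) * z.1 (Fin.castLE hKp j) +
            L (Fin.castLE hKp j) * z.2 (Fin.castLE hKq j) -
            L (Fin.castLE hKp j) * M (Fin.castLE hKq j)) := by
    intro j
    have e1 : ∀ i, w i * ((V i).1 (Fin.castLE hKp j) * (V i).2 (Fin.castLE hKq j))
        = w i * ((v j (i j)).1 * (v j (i j)).2) := fun i => by rw [hVe1, hVe2]
    rw [Finset.sum_congr rfl fun i _ => e1 i]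
    have hm := prod_marginal lam hls j (fun k => (v j k).1 * (v j k).2)
    simp only [hwdef]
    rw [hm, hvp j]
  clear_value w V
  have hzV : ∑ i, w i • V i = z := by
    have hfst : (∑ i, w i • V i).1 = z.1 := by
      rw [Prod.fst_sum]
      funext j'
      rw [Finset.sum_apply]
      simp only [Prod.smul_fst, Pi.smul_apply, smul_eq_mul]
      exact hV1 j'
    have hsnd : (∑ i, w i • V i).2 = z.2 := by
      rw [Prod.snd_sum]
      funext k'
      rw [Finset.sum_apply]
      simp only [Prod.smul_snd, Pi.smul_apply, smul_eq_mul]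
      exact hV2 k'
    exact Prod.ext hfst hsnd
  have hfV : ∑ i, w i * f (V i) = G z := by
    have split : ∀ i, w i * f (V i) =
        (∑ j : Fin K, σ j * (w i * ((V i).1 (Fin.castLE hKp j) * (V i).2 (Fin.castLE hKq j)))) +
        (∑ j', a j' * (w i * (V i).1 j')) + (∑ k', b k' * (w i * (V i).2 k')) := by
      intro i
      rw [hf, mul_add, mul_add, Finset.mul_sum, Finset.mul_sum, Finset.mul_sum]
      congr 1
      · congr 1
        · exact Finset.sum_congr rfl fun j _ => by ring
        · exact Finset.sum_congr rfl fun j _ => by ring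
      · exact Finset.sum_congr rfl fun k _ => by ring
    rw [Finset.sum_congr rfl fun i _ => split i, Finset.sum_add_distrib,
      Finset.sum_add_distrib]
    simp only [hG]
    congr 1
    · congr 1
      · rw [Finset.sum_comm]
        exact Finset.sum_congr rfl fun j _ => by
          rw [← Finset.mul_sum, hbil j, mul_max_of_nonneg _ _ (hσ j)]
      · rw [Finset.sum_comm]
        exact Finset.sum_congr rfl fun j' _ => by rw [← Finset.mul_sum, hV1 j']
    · rw [Finset.sum_comm]
      exact Finset.sum_congr rfl fun k' _ => by rw [← Finset.mul_sum, hV2 k']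
  -- every convex underestimator is ≤ G z at z
  have hub : ∀ val ∈ {v | ∃ g : _ → ℝ, ConvexOn ℝ Ω g ∧ (∀ q ∈ Ω, g q ≤ f q) ∧ v = g z},
      val ≤ G z := by
    rintro val ⟨h, hconv, hle, rfl⟩
    calc h z = h (∑ i, w i • V i) := by rw [hzV]
      _ ≤ ∑ i, w i • h (V i) :=
        hconv.map_sum_le (fun i _ => hw0 i) hw1 (fun i _ => hVΩ i)
      _ ≤ ∑ i, w i * f (V i) := by
        refine Finset.sum_le_sum fun i _ => ?_
        rw [smul_eq_mul]
        exact mul_le_mul_of_nonneg_left (hle _ (hVΩ i)) (hw0 i)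
      _ = G z := hfV
  have hmem : G z ∈ {v | ∃ g : _ → ℝ, ConvexOn ℝ Ω g ∧ (∀ q ∈ Ω, g q ≤ f q) ∧ v = g z} :=
    ⟨G, hGconv, hGle, rfl⟩
  rw [convexEnvelope]
  exact le_antisymm (csSup_le ⟨G z, hmem⟩ hub) (le_csSup ⟨G z, hub⟩ hmem)
end

section
/- Let Φ : M_d(ℂ) → M_d(ℂ) be a quantum channel with d ≥ 2 and define f : [0,2] → [0,2] by f(δ) = sup{‖Φ(ρ₀) − Φ(ρ₁)‖₁ : ρ₀, ρ₁ density matrices on ℂ^d with ‖ρ₀ − ρ₁‖₁ = δ}. Then f is monotonically nondecreasing: f(δ) ≤ f(δ′) whenever 0 ≤ δ ≤ δ′ ≤ 2. -/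
open scoped ComplexOrder

/-- The trace norm `‖A‖₁ = tr √(A†A)` of a complex matrix. -/
noncomputable def traceNorm {d : ℕ} (A : Matrix (Fin d) (Fin d) ℂ) : ℝ :=
  ((Matrix.posSemidef_conjTranspose_mul_self A).1.eigenvectorUnitary.1 *
      Matrix.diagonal (((↑) : ℝ → ℂ) ∘ (Real.sqrt ·) ∘ (Matrix.posSemidef_conjTranspose_mul_self A).1.eigenvalues) *
      (star (Matrix.posSemidef_conjTranspose_mul_self A).1.eigenvectorUnitary : Matrix (Fin d) (Fin d) ℂ)).trace.re

/-- A density matrix: positive semidefinite with unit trace. -/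
def IsDensity {d : ℕ} (ρ : Matrix (Fin d) (Fin d) ℂ) : Prop :=
  ρ.PosSemidef ∧ ρ.trace = 1

/-- The map `Φ ⊗ id_n` acting on `M_d(ℂ) ⊗ M_n(ℂ)`. -/
def stackMap {d : ℕ} (Φ : Matrix (Fin d) (Fin d) ℂ →ₗ[ℂ] Matrix (Fin d) (Fin d) ℂ) (n : ℕ)
    (M : Matrix (Fin d × Fin n) (Fin d × Fin n) ℂ) : Matrix (Fin d × Fin n) (Fin d × Fin n) ℂ :=
  Matrix.of fun ia jb => Φ (Matrix.of fun i j => M (i, ia.2) (j, jb.2)) ia.1 jb.1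

/-- A quantum channel: a completely positive trace-preserving linear map. -/
def IsCPTP {d : ℕ} (Φ : Matrix (Fin d) (Fin d) ℂ →ₗ[ℂ] Matrix (Fin d) (Fin d) ℂ) : Prop :=
  (∀ A, (Φ A).trace = A.trace) ∧
    ∀ (n : ℕ) (M : Matrix (Fin d × Fin n) (Fin d × Fin n) ℂ),
      M.PosSemidef → (stackMap Φ n M).PosSemidef

/-- The Dobrushin coefficient `η(Φ)`. -/
noncomputable def dobrushinCoeff {d : ℕ}
    (Φ : Matrix (Fin d) (Fin d) ℂ →ₗ[ℂ] Matrix (Fin d) (Fin d) ℂ) : ℝ :=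
  sSup {r | ∃ ρ₀ ρ₁ : Matrix (Fin d) (Fin d) ℂ, IsDensity ρ₀ ∧ IsDensity ρ₁ ∧ ρ₀ ≠ ρ₁ ∧
    r = traceNorm (Φ ρ₀ - Φ ρ₁) / traceNorm (ρ₀ - ρ₁)}

/-!
If `‖ρ₀ - ρ₁‖₁ = δ > 0` and `δ ≤ δ' ≤ 2`, split `ρ₀ - ρ₁ = P - N` into its positive and negative
parts, so that `P N = 0` and `tr P = tr N = δ / 2`. For `c = δ' / δ ≥ 1` the states
`c P + (1 - δ'/2) ρ₀` and `c N + (1 - δ'/2) ρ₀` are at trace distance `δ'`, and by linearity their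
images under `Φ` are at distance `c ‖Φ ρ₀ - Φ ρ₁‖₁ ≥ ‖Φ ρ₀ - Φ ρ₁‖₁`. If `δ = 0` the two states
coincide. The suprema are finite because trace distances of states are at most `2`: with `Q` the
support projection of `P`, `tr P = tr Q (ρ₀ - ρ₁) ≤ tr Q ρ₀ ≤ 1`.
-/

open Matrix
open scoped MatrixOrder

namespace Matrix

variable {n : Type*} [Fintype n]

lemma PosSemidef.ofReal_re_trace {M : Matrix n n ℂ} (hM : M.PosSemidef) :
    (M.trace.re : ℂ) = M.trace :=
  (Complex.eq_re_of_ofReal_le (r := 0) (by simpa using hM.trace_nonneg)).symm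

lemma trace_mul_nonneg_of_isIdempotentElem {Q Y : Matrix n n ℂ} (hQ : IsSelfAdjoint Q)
    (hQQ : IsIdempotentElem Q) (hY : Y.PosSemidef) : 0 ≤ (Q * Y).trace := by
  have h := (hY.mul_mul_conjTranspose_same Q).trace_nonneg
  rwa [trace_mul_cycle, show Qᴴ = Q from hQ, hQQ.eq] at h

variable [DecidableEq n]

lemma exists_isIdempotentElem_mul_eq_posPart {A : Matrix n n ℂ} (hA : IsSelfAdjoint A) :
    ∃ Q : Matrix n n ℂ, IsSelfAdjoint Q ∧ IsIdempotentElem Q ∧ Q * A = A⁺ := by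
  have hcont (f : ℝ → ℝ) : ContinuousOn f (spectrum ℝ A) := A.finite_real_spectrum.continuousOn f
  set ind : ℝ → ℝ := fun x => if 0 < x then 1 else 0
  refine ⟨cfc ind A, cfc_predicate ind A, ?_, ?_⟩
  · rw [IsIdempotentElem, ← cfc_mul ind ind A (hcont _) (hcont _)]
    congr with x
    by_cases hx : 0 < x <;> simp [ind, hx]
  · rw [CFC.posPart_def, cfcₙ_eq_cfc]
    nth_rw 2 [← cfc_id' ℝ A]
    rw [← cfc_mul ind _ A (hcont _) (hcont _)]
    congr with x
    by_cases hx : 0 < x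
    · simp [ind, hx, hx.le]
    · simp [ind, hx, posPart_eq_zero.2 (not_lt.1 hx)]

lemma trace_posPart_sub_le {X Y : Matrix n n ℂ} (hX : X.PosSemidef) (hY : Y.PosSemidef) :
    (X - Y)⁺.trace ≤ X.trace := by
  obtain ⟨Q, hQ, hQQ, hQA⟩ := exists_isIdempotentElem_mul_eq_posPart (hX.1.sub hY.1)
  have hQX : 0 ≤ ((1 - Q) * X).trace :=
    trace_mul_nonneg_of_isIdempotentElem (.sub (.one _) hQ) hQQ.one_sub hX
  have hQY : 0 ≤ (Q * Y).trace := trace_mul_nonneg_of_isIdempotentElem hQ hQQ hY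
  rw [← hQA, Matrix.mul_sub, trace_sub]
  rw [Matrix.sub_mul, Matrix.one_mul, trace_sub] at hQX
  calc (Q * X).trace - (Q * Y).trace ≤ (Q * X).trace := sub_le_self _ hQY
    _ ≤ X.trace := sub_nonneg.1 hQX

lemma trace_negPart_eq_trace_posPart {A : Matrix n n ℂ} (hA : IsSelfAdjoint A)
    (htr : A.trace = 0) : A⁻.trace = A⁺.trace := by
  rw [← CFC.posPart_sub_negPart A hA, trace_sub, sub_eq_zero] at htr
  exact htr.symm

end Matrix

section TraceNorm

variable {d : ℕ}

lemma traceNorm_eq_re_trace_sqrt (A : Matrix (Fin d) (Fin d) ℂ) :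
    traceNorm A = (CFC.sqrt (Aᴴ * A)).trace.re := by
  have hA := posSemidef_conjTranspose_mul_self A
  rw [CFC.sqrt_eq_real_sqrt _ hA.nonneg, cfcₙ_eq_cfc, hA.1.cfc_eq, IsHermitian.cfc,
    Unitary.conjStarAlgAut_apply]
  rfl

lemma traceNorm_eq_of_mul_self_eq {A S : Matrix (Fin d) (Fin d) ℂ} (hS : S.PosSemidef)
    (h : S * S = Aᴴ * A) : traceNorm A = S.trace.re := by
  rw [traceNorm_eq_re_trace_sqrt, CFC.sqrt_unique h hS.nonneg]

lemma traceNorm_nonneg (A : Matrix (Fin d) (Fin d) ℂ) : 0 ≤ traceNorm A := by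
  rw [traceNorm_eq_re_trace_sqrt]
  exact Complex.nonneg_iff.1 (CFC.sqrt_nonneg _).posSemidef.trace_nonneg |>.1

lemma traceNorm_zero : traceNorm (0 : Matrix (Fin d) (Fin d) ℂ) = 0 := by
  simpa using traceNorm_eq_of_mul_self_eq PosSemidef.zero (A := 0) (by simp)

lemma eq_zero_of_traceNorm_eq_zero {A : Matrix (Fin d) (Fin d) ℂ} (h : traceNorm A = 0) :
    A = 0 := by
  rw [traceNorm_eq_re_trace_sqrt] at h
  have hA := posSemidef_conjTranspose_mul_self A
  have hS := (CFC.sqrt_nonneg (Aᴴ * A)).posSemidef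
  have hS0 : CFC.sqrt (Aᴴ * A) = 0 := by
    rw [← hS.trace_eq_zero_iff, ← hS.ofReal_re_trace, h, Complex.ofReal_zero]
  rw [← conjTranspose_mul_self_eq_zero, ← CFC.sqrt_mul_sqrt_self _ hA.nonneg, hS0, zero_mul]

lemma traceNorm_smul {c : ℝ} (hc : 0 ≤ c) (A : Matrix (Fin d) (Fin d) ℂ) :
    traceNorm (c • A) = c * traceNorm A := by
  have hS := (CFC.sqrt_nonneg (Aᴴ * A)).posSemidef
  rw [traceNorm_eq_re_trace_sqrt A, traceNorm_eq_of_mul_self_eq (hS.smul hc)]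
  · simp
  · rw [smul_mul_smul_comm, CFC.sqrt_mul_sqrt_self _ (posSemidef_conjTranspose_mul_self A).nonneg,
      conjTranspose_smul, smul_mul_smul_comm, star_trivial]

lemma traceNorm_sub_eq_of_mul_eq_zero {P N : Matrix (Fin d) (Fin d) ℂ} (hP : P.PosSemidef)
    (hN : N.PosSemidef) (hPN : P * N = 0) : traceNorm (P - N) = P.trace.re + N.trace.re := by
  have hNP : N * P = 0 := by
    rw [← hP.1.eq, ← hN.1.eq, ← conjTranspose_mul, hPN, conjTranspose_zero]
  rw [traceNorm_eq_of_mul_self_eq (hP.add hN), trace_add, Complex.add_re]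
  rw [conjTranspose_sub, hP.1.eq, hN.1.eq]
  simp only [add_mul, mul_add, sub_mul, mul_sub, hPN, hNP]
  abel

lemma traceNorm_eq_re_trace_posPart_add_negPart {A : Matrix (Fin d) (Fin d) ℂ}
    (hA : IsSelfAdjoint A) : traceNorm A = A⁺.trace.re + A⁻.trace.re := by
  nth_rw 1 [← CFC.posPart_sub_negPart A hA]
  exact traceNorm_sub_eq_of_mul_eq_zero (CFC.posPart_nonneg A).posSemidef
    (CFC.negPart_nonneg A).posSemidef (CFC.posPart_mul_negPart A)

lemma trace_posPart_eq_traceNorm_div_two {A : Matrix (Fin d) (Fin d) ℂ} (hA : IsSelfAdjoint A)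
    (htr : A.trace = 0) : A⁺.trace = (traceNorm A / 2 : ℝ) := by
  rw [traceNorm_eq_re_trace_posPart_add_negPart hA, trace_negPart_eq_trace_posPart hA htr,
    add_self_div_two, (CFC.posPart_nonneg A).posSemidef.ofReal_re_trace]

lemma IsDensity.trace_sub {ρ₀ ρ₁ : Matrix (Fin d) (Fin d) ℂ} (h₀ : IsDensity ρ₀)
    (h₁ : IsDensity ρ₁) : (ρ₀ - ρ₁).trace = 0 := by
  rw [Matrix.trace_sub, h₀.2, h₁.2, sub_self]

lemma IsDensity.traceNorm_sub_le_two {ρ₀ ρ₁ : Matrix (Fin d) (Fin d) ℂ} (h₀ : IsDensity ρ₀)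
    (h₁ : IsDensity ρ₁) : traceNorm (ρ₀ - ρ₁) ≤ 2 := by
  have h := trace_posPart_sub_le h₀.1 h₁.1
  rw [trace_posPart_eq_traceNorm_div_two (h₀.1.1.sub h₁.1.1) (h₀.trace_sub h₁), h₀.2] at h
  have : traceNorm (ρ₀ - ρ₁) / 2 ≤ 1 := by exact_mod_cast h
  linarith

lemma exists_isDensity_sub_eq_smul {ρ₀ ρ₁ : Matrix (Fin d) (Fin d) ℂ} (h₀ : IsDensity ρ₀)
    (h₁ : IsDensity ρ₁) {c : ℝ} (hc : 0 ≤ c) (hc₂ : c * traceNorm (ρ₀ - ρ₁) ≤ 2) :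
    ∃ σ₀ σ₁ : Matrix (Fin d) (Fin d) ℂ, IsDensity σ₀ ∧ IsDensity σ₁ ∧
      σ₀ - σ₁ = c • (ρ₀ - ρ₁) := by
  set A := ρ₀ - ρ₁
  have hA : IsSelfAdjoint A := h₀.1.1.sub h₁.1.1
  have htr : A.trace = 0 := h₀.trace_sub h₁
  set s : ℝ := 1 - c * traceNorm A / 2
  have hs : 0 ≤ s := by simp only [s]; linarith
  have hdens {P : Matrix (Fin d) (Fin d) ℂ} (hP : P.PosSemidef)
      (hPtr : P.trace = (traceNorm A / 2 : ℝ)) : IsDensity (c • P + s • ρ₀) := by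
    refine ⟨(hP.smul hc).add (h₀.1.smul hs), ?_⟩
    rw [trace_add, trace_smul, trace_smul, hPtr, h₀.2, Complex.real_smul, Complex.real_smul]
    push_cast [s]
    ring
  refine ⟨c • A⁺ + s • ρ₀, c • A⁻ + s • ρ₀,
    hdens (CFC.posPart_nonneg A).posSemidef (trace_posPart_eq_traceNorm_div_two hA htr),
    hdens (CFC.negPart_nonneg A).posSemidef
      (by rw [trace_negPart_eq_trace_posPart hA htr, trace_posPart_eq_traceNorm_div_two hA htr]),
    ?_⟩
  rw [add_sub_add_right_eq_sub, ← smul_sub, CFC.posPart_sub_negPart A hA]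

lemma exists_isDensity_traceNorm_sub_eq (hd : 2 ≤ d) {δ : ℝ} (h0 : 0 ≤ δ) (h2 : δ ≤ 2) :
    ∃ ρ₀ ρ₁ : Matrix (Fin d) (Fin d) ℂ, IsDensity ρ₀ ∧ IsDensity ρ₁ ∧ traceNorm (ρ₀ - ρ₁) = δ := by
  have hpure (i : Fin d) : IsDensity (single i i (1 : ℂ)) := by
    refine ⟨?_, trace_single_eq_same i 1⟩
    rw [← diagonal_single]
    refine posSemidef_diagonal_iff.2 fun j => ?_
    by_cases hj : j = i <;> simp [hj]
  let i₀ : Fin d := ⟨0, by omega⟩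
  let i₁ : Fin d := ⟨1, by omega⟩
  have hne : i₀ ≠ i₁ := by simp [i₀, i₁, Fin.ext_iff]
  have hdist : traceNorm (single i₀ i₀ (1 : ℂ) - single i₁ i₁ 1) = 2 := by
    rw [traceNorm_sub_eq_of_mul_eq_zero (hpure i₀).1 (hpure i₁).1 (by simp [hne]),
      trace_single_eq_same, trace_single_eq_same]
    norm_num
  obtain ⟨σ₀, σ₁, hσ₀, hσ₁, hσ⟩ := exists_isDensity_sub_eq_smul (hpure i₀) (hpure i₁)
    (c := δ / 2) (by positivity) (by rw [hdist]; linarith)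
  refine ⟨σ₀, σ₁, hσ₀, hσ₁, ?_⟩
  rw [hσ, traceNorm_smul (by positivity), hdist, div_mul_cancel₀ _ two_ne_zero]

lemma IsCPTP.posSemidef_map {Φ : Matrix (Fin d) (Fin d) ℂ →ₗ[ℂ] Matrix (Fin d) (Fin d) ℂ}
    (hΦ : IsCPTP Φ) {ρ : Matrix (Fin d) (Fin d) ℂ} (hρ : ρ.PosSemidef) : (Φ ρ).PosSemidef := by
  have h := (hΦ.2 1 _ (hρ.submatrix (Prod.fst : Fin d × Fin 1 → Fin d))).submatrix
    (fun i : Fin d => (i, (0 : Fin 1)))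
  convert h using 1
  ext i j
  rfl

lemma IsCPTP.isDensity_map {Φ : Matrix (Fin d) (Fin d) ℂ →ₗ[ℂ] Matrix (Fin d) (Fin d) ℂ}
    (hΦ : IsCPTP Φ) {ρ : Matrix (Fin d) (Fin d) ℂ} (hρ : IsDensity ρ) : IsDensity (Φ ρ) :=
  ⟨hΦ.posSemidef_map hρ.1, (hΦ.1 ρ).trans hρ.2⟩

lemma exists_isDensity_traceNorm_sub_eq_and_le (hd : 2 ≤ d)
    (Φ : Matrix (Fin d) (Fin d) ℂ →ₗ[ℂ] Matrix (Fin d) (Fin d) ℂ)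
    {ρ₀ ρ₁ : Matrix (Fin d) (Fin d) ℂ} (h₀ : IsDensity ρ₀) (h₁ : IsDensity ρ₁) {δ' : ℝ}
    (hle : traceNorm (ρ₀ - ρ₁) ≤ δ') (h₂ : δ' ≤ 2) :
    ∃ σ₀ σ₁ : Matrix (Fin d) (Fin d) ℂ, IsDensity σ₀ ∧ IsDensity σ₁ ∧
      traceNorm (σ₀ - σ₁) = δ' ∧ traceNorm (Φ ρ₀ - Φ ρ₁) ≤ traceNorm (Φ σ₀ - Φ σ₁) := by
  rcases (traceNorm_nonneg (ρ₀ - ρ₁)).eq_or_lt with hzero | hpos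
  · obtain ⟨σ₀, σ₁, hσ₀, hσ₁, hσ⟩ := exists_isDensity_traceNorm_sub_eq hd (hzero ▸ hle) h₂
    refine ⟨σ₀, σ₁, hσ₀, hσ₁, hσ, ?_⟩
    rw [← map_sub, eq_zero_of_traceNorm_eq_zero hzero.symm, map_zero, traceNorm_zero]
    exact traceNorm_nonneg _
  · set c := δ' / traceNorm (ρ₀ - ρ₁)
    have hc : 1 ≤ c := (one_le_div hpos).2 hle
    have hct : c * traceNorm (ρ₀ - ρ₁) = δ' := div_mul_cancel₀ _ hpos.ne'
    obtain ⟨σ₀, σ₁, hσ₀, hσ₁, hσ⟩ :=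
      exists_isDensity_sub_eq_smul h₀ h₁ (zero_le_one.trans hc) (hct.trans_le h₂)
    have hΦσ : Φ σ₀ - Φ σ₁ = c • (Φ ρ₀ - Φ ρ₁) := by
      rw [← map_sub, hσ, Φ.map_smul_of_tower, map_sub]
    refine ⟨σ₀, σ₁, hσ₀, hσ₁, by rw [hσ, traceNorm_smul (zero_le_one.trans hc), hct], ?_⟩
    rw [hΦσ, traceNorm_smul (zero_le_one.trans hc)]
    exact le_mul_of_one_le_left (traceNorm_nonneg _) hc

end TraceNorm

/-- For a quantum channel `Φ` on `M_d(ℂ)` with `d ≥ 2`, the function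
`f(δ) = sup {‖Φ(ρ₀) − Φ(ρ₁)‖₁ : ‖ρ₀ − ρ₁‖₁ = δ}` is monotonically nondecreasing on `[0,2]`. -/
theorem stmt_6 (d : ℕ) (hd : 2 ≤ d)
    (Φ : Matrix (Fin d) (Fin d) ℂ →ₗ[ℂ] Matrix (Fin d) (Fin d) ℂ) (hΦ : IsCPTP Φ)
    (f : ℝ → ℝ)
    (hf : ∀ δ, f δ = sSup {r | ∃ ρ₀ ρ₁ : Matrix (Fin d) (Fin d) ℂ, IsDensity ρ₀ ∧ IsDensity ρ₁ ∧
        traceNorm (ρ₀ - ρ₁) = δ ∧ r = traceNorm (Φ ρ₀ - Φ ρ₁)}) :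
    ∀ δ δ' : ℝ, 0 ≤ δ → δ ≤ δ' → δ' ≤ 2 → f δ ≤ f δ' := by
  intro δ δ' hδ hδδ' hδ'
  have hbdd : BddAbove {r | ∃ ρ₀ ρ₁ : Matrix (Fin d) (Fin d) ℂ, IsDensity ρ₀ ∧ IsDensity ρ₁ ∧
      traceNorm (ρ₀ - ρ₁) = δ' ∧ r = traceNorm (Φ ρ₀ - Φ ρ₁)} := by
    refine ⟨2, ?_⟩
    rintro _ ⟨ρ₀, ρ₁, h₀, h₁, -, rfl⟩
    exact (hΦ.isDensity_map h₀).traceNorm_sub_le_two (hΦ.isDensity_map h₁)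
  obtain ⟨ρ₀, ρ₁, h₀, h₁, hρ⟩ := exists_isDensity_traceNorm_sub_eq hd hδ (hδδ'.trans hδ')
  rw [hf, hf]
  refine csSup_le ⟨_, ρ₀, ρ₁, h₀, h₁, hρ, rfl⟩ ?_
  rintro _ ⟨ρ₀, ρ₁, h₀, h₁, rfl, rfl⟩
  obtain ⟨σ₀, σ₁, hσ₀, hσ₁, hσ, hle⟩ :=
    exists_isDensity_traceNorm_sub_eq_and_le hd Φ h₀ h₁ hδδ' hδ'
  exact hle.trans (le_csSup hbdd ⟨σ₀, σ₁, hσ₀, hσ₁, hσ, rfl⟩)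
end
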